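/- arXiv:1207.1003 — 2 statements merged into one kernel-verified Lean document; each statement's English description precedes it below -/
import Mathlib

section
/- Proposition 6.1 (coefficient transfer): Let Σ be a k×k symmetric positive definite matrix, μ̃ ∈ R^k, A = Σ + μ̃μ̃′, and α̃ ≠ 0. Define Q̃ = A⁻¹ − (A⁻¹11′A⁻¹)/(1′A⁻¹1), Q = Σ⁻¹ − (Σ⁻¹11′Σ⁻¹)/(1′Σ⁻¹1), and suppose (1+μ̃′Σ⁻¹μ̃)(1′Σ⁻¹1) − (1′Σ⁻¹μ̃)² ≠ 0. Then A⁻¹1/(1′A⁻¹1) + α̃⁻¹ Q̃ μ̃ = Σ⁻¹1/(1′Σ⁻¹1) + α⁻¹ Q μ̃, where α⁻¹ = (α̃⁻¹ (1′Σ⁻¹1) − 1′Σ⁻¹μ̃) / ((1+μ̃′Σ⁻¹μ̃)(1′Σ⁻¹1) − (1′Σ⁻¹μ̃)²). -/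
/-!
By Sherman–Morrison, `A⁻¹ = Σ⁻¹ - (1 + c)⁻¹ Σ⁻¹ μ̃ μ̃′ Σ⁻¹`, so every vector in the identity lies in
the span of `u = Σ⁻¹ 1` and `v = Σ⁻¹ μ̃`, with coefficients rational in `a = 1′Σ⁻¹1`,
`b = 1′Σ⁻¹μ̃` and `c = μ̃′Σ⁻¹μ̃`. In particular `1′A⁻¹1 = ((1 + c) a - b²) / (1 + c)`, and comparing
the coefficients of `u` and `v` leaves two identities of rational functions in `a, b, c, α̃⁻¹`.
-/

open Matrix

namespace Matrix

section CommSemiring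

variable {n R : Type*} [Fintype n] [CommSemiring R]

theorem IsSymm.dotProduct_mulVec_comm {M : Matrix n n R} (hM : M.IsSymm) (x y : n → R) :
    x ⬝ᵥ M *ᵥ y = y ⬝ᵥ M *ᵥ x := by
  rw [dotProduct_mulVec, ← mulVec_transpose, hM.eq, dotProduct_comm]

theorem mul_vecMulVec_mul_mulVec (M N : Matrix n n R) (x y w : n → R) :
    (M * vecMulVec x y * N) *ᵥ w = (y ⬝ᵥ N *ᵥ w) • M *ᵥ x := by
  rw [← mulVec_mulVec, ← mulVec_mulVec, vecMulVec_mulVec, op_smul_eq_smul, mulVec_smul]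

theorem vecMulVec_mul_mul_vecMulVec (M : Matrix n n R) (u v : n → R) :
    vecMulVec u v * M * vecMulVec u v = (v ⬝ᵥ M *ᵥ u) • vecMulVec u v := by
  rw [vecMulVec_mul, vecMulVec_mul_vecMulVec, ← dotProduct_mulVec, vecMulVec_smul]

end CommSemiring

/-- The Sherman–Morrison formula. -/
theorem inv_add_vecMulVec {n K : Type*} [Fintype n] [DecidableEq n] [Field K]
    {S : Matrix n n K} (hS : IsUnit S.det) (u v : n → K) (h : 1 + v ⬝ᵥ S⁻¹ *ᵥ u ≠ 0) :
    (S + vecMulVec u v)⁻¹ =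
      S⁻¹ - (1 + v ⬝ᵥ S⁻¹ *ᵥ u)⁻¹ • (S⁻¹ * vecMulVec u v * S⁻¹) := by
  apply inv_eq_right_inv
  simp only [add_mul, mul_sub, mul_smul_comm, ← Matrix.mul_assoc, mul_nonsing_inv _ hS,
    Matrix.one_mul, vecMulVec_mul_mul_vecMulVec, smul_mul]
  nth_rw 2 [← one_smul K (vecMulVec u v * S⁻¹)]
  rw [← add_smul, inv_smul_smul₀ h, add_sub_cancel_right]

end Matrix

theorem stmt_10_general {k : ℕ} (S : Matrix (Fin k) (Fin k) ℝ) (hS : S.PosDef)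
    (μ : Fin k → ℝ) (αt : ℝ)
    (hden : (1 + μ ⬝ᵥ S⁻¹ *ᵥ μ) * ((fun _ => (1:ℝ)) ⬝ᵥ S⁻¹ *ᵥ (fun _ => (1:ℝ)))
        - ((fun _ => (1:ℝ)) ⬝ᵥ S⁻¹ *ᵥ μ) ^ 2 ≠ 0) :
    let ones : Fin k → ℝ := fun _ => 1
    let A : Matrix (Fin k) (Fin k) ℝ := S + vecMulVec μ μ
    let Qt : Matrix (Fin k) (Fin k) ℝ :=
      A⁻¹ - (ones ⬝ᵥ A⁻¹ *ᵥ ones)⁻¹ • (A⁻¹ * vecMulVec ones ones * A⁻¹)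
    let Q : Matrix (Fin k) (Fin k) ℝ :=
      S⁻¹ - (ones ⬝ᵥ S⁻¹ *ᵥ ones)⁻¹ • (S⁻¹ * vecMulVec ones ones * S⁻¹)
    let αinv : ℝ :=
      (αt⁻¹ * (ones ⬝ᵥ S⁻¹ *ᵥ ones) - ones ⬝ᵥ S⁻¹ *ᵥ μ) /
        ((1 + μ ⬝ᵥ S⁻¹ *ᵥ μ) * (ones ⬝ᵥ S⁻¹ *ᵥ ones) - (ones ⬝ᵥ S⁻¹ *ᵥ μ) ^ 2)
    (ones ⬝ᵥ A⁻¹ *ᵥ ones)⁻¹ • (A⁻¹ *ᵥ ones) + αt⁻¹ • (Qt *ᵥ μ) =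
      (ones ⬝ᵥ S⁻¹ *ᵥ ones)⁻¹ • (S⁻¹ *ᵥ ones) + αinv • (Q *ᵥ μ) := by
  intro ones A Qt Q αinv
  obtain hk | hk := isEmpty_or_nonempty (Fin k)
  · exact Subsingleton.elim _ _
  have hSinv : S⁻¹.PosDef := hS.inv
  have hsymm : S⁻¹.IsSymm := by
    rw [IsSymm, ← conjTranspose_eq_transpose_of_trivial]
    exact hSinv.isHermitian
  have ha : 0 < ones ⬝ᵥ S⁻¹ *ᵥ ones := by
    have hones : ones ≠ 0 := Function.ne_iff.2 ⟨hk.some, one_ne_zero⟩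
    simpa using hSinv.dotProduct_mulVec_pos hones
  have hd : 0 < 1 + μ ⬝ᵥ S⁻¹ *ᵥ μ := by
    have := hSinv.posSemidef.dotProduct_mulVec_nonneg μ
    rw [star_trivial] at this
    linarith
  have hAinv : A⁻¹ = _ := inv_add_vecMulVec hS.det_pos.ne'.isUnit μ μ hd.ne'
  simp only [Qt, Q, αinv, hAinv, sub_mulVec, smul_mulVec, mul_vecMulVec_mul_mulVec,
    dotProduct_sub, dotProduct_smul, smul_eq_mul, hsymm.dotProduct_mulVec_comm μ ones]
  generalize ones ⬝ᵥ S⁻¹ *ᵥ ones = a at *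
  generalize ones ⬝ᵥ S⁻¹ *ᵥ μ = b at *
  generalize μ ⬝ᵥ S⁻¹ *ᵥ μ = c at *
  rw [show a - (1 + c)⁻¹ * (b * b) = ((1 + c) * a - b ^ 2) / (1 + c) by field_simp]
  match_scalars <;> field_simp <;> ring

theorem stmt_10 {k : ℕ} (S : Matrix (Fin k) (Fin k) ℝ) (hS : S.PosDef)
    (μ : Fin k → ℝ) (αt : ℝ) (hαt : αt ≠ 0)
    (hden : (1 + μ ⬝ᵥ S⁻¹ *ᵥ μ) * ((fun _ => (1:ℝ)) ⬝ᵥ S⁻¹ *ᵥ (fun _ => (1:ℝ)))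
        - ((fun _ => (1:ℝ)) ⬝ᵥ S⁻¹ *ᵥ μ) ^ 2 ≠ 0) :
    let ones : Fin k → ℝ := fun _ => 1
    let A : Matrix (Fin k) (Fin k) ℝ := S + vecMulVec μ μ
    let Qt : Matrix (Fin k) (Fin k) ℝ :=
      A⁻¹ - (ones ⬝ᵥ A⁻¹ *ᵥ ones)⁻¹ • (A⁻¹ * vecMulVec ones ones * A⁻¹)
    let Q : Matrix (Fin k) (Fin k) ℝ :=
      S⁻¹ - (ones ⬝ᵥ S⁻¹ *ᵥ ones)⁻¹ • (S⁻¹ * vecMulVec ones ones * S⁻¹)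
    let αinv : ℝ :=
      (αt⁻¹ * (ones ⬝ᵥ S⁻¹ *ᵥ ones) - ones ⬝ᵥ S⁻¹ *ᵥ μ) /
        ((1 + μ ⬝ᵥ S⁻¹ *ᵥ μ) * (ones ⬝ᵥ S⁻¹ *ᵥ ones) - (ones ⬝ᵥ S⁻¹ *ᵥ μ) ^ 2)
    (ones ⬝ᵥ A⁻¹ *ᵥ ones)⁻¹ • (A⁻¹ *ᵥ ones) + αt⁻¹ • (Qt *ᵥ μ) =
      (ones ⬝ᵥ S⁻¹ *ᵥ ones)⁻¹ • (S⁻¹ *ᵥ ones) + αinv • (Q *ᵥ μ) :=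
  stmt_10_general S hS μ αt hden
end

section
/- Let Σ be a k×k symmetric positive definite matrix, μ̃ ∈ R^k, and A = Σ + μ̃μ̃′. Define R_GMV = (1′Σ⁻¹μ̃ − 1′Σ⁻¹1)/(1′Σ⁻¹1) written for μ = μ̃ − 1 as R_GMV = 1′Σ⁻¹μ/(1′Σ⁻¹1), V_GMV = 1/(1′Σ⁻¹1), and s = μ′Qμ with Q = Σ⁻¹ − (Σ⁻¹11′Σ⁻¹)/(1′Σ⁻¹1). Then 1′A⁻¹μ̃ = (1 + R_GMV) / ((1 + R_GMV)² + (1 + s) V_GMV). -/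
/-!
Since `(Σ + μ̃μ̃′) Σ⁻¹μ̃ = (1 + μ̃′Σ⁻¹μ̃) μ̃`, we get `1′A⁻¹μ̃ = 1′Σ⁻¹μ̃ / (1 + μ̃′Σ⁻¹μ̃)` without
inverting `A` explicitly. With `a = 1′Σ⁻¹μ`, `b = 1′Σ⁻¹1`, `c = μ′Σ⁻¹μ` and `μ̃ = μ + 1` this is
`(a + b) / (1 + c + 2a + b)`; on the other side `R_GMV = a / b`, `V_GMV = 1 / b` and
`s = c - a² / b`, and multiplying numerator and denominator by `b` gives the same fraction.
-/

open Matrix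

namespace Matrix

variable {n R : Type*} [Fintype n]

theorem dotProduct_mulVec_comm_of_isSymm [CommSemiring R] {M : Matrix n n R} (hM : M.IsSymm)
    (u v : n → R) : u ⬝ᵥ M *ᵥ v = v ⬝ᵥ M *ᵥ u := by
  rw [dotProduct_mulVec, ← mulVec_transpose, hM.eq, dotProduct_comm]

theorem dotProduct_mul_vecMulVec_mul_mulVec [CommSemiring R] (M N : Matrix n n R)
    (x y u w : n → R) :
    x ⬝ᵥ (M * vecMulVec u w * N) *ᵥ y = (x ⬝ᵥ M *ᵥ u) * (w ⬝ᵥ N *ᵥ y) := by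
  rw [mul_vecMulVec, vecMulVec_mul, vecMulVec_mulVec, op_smul_eq_smul, dotProduct_smul,
    smul_eq_mul, ← dotProduct_mulVec, mul_comm]

theorem inv_add_vecMulVec_mulVec [DecidableEq n] {K : Type*} [Field K] {S : Matrix n n K}
    (hS : IsUnit S) {u v : n → K} (hA : IsUnit (S + vecMulVec u v)) :
    (S + vecMulVec u v)⁻¹ *ᵥ u = (1 + v ⬝ᵥ S⁻¹ *ᵥ u)⁻¹ • S⁻¹ *ᵥ u := by
  have hSdet := (isUnit_iff_isUnit_det S).mp hS
  have hAdet := (isUnit_iff_isUnit_det _).mp hA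
  have himage : (S + vecMulVec u v) *ᵥ (S⁻¹ *ᵥ u) = (1 + v ⬝ᵥ S⁻¹ *ᵥ u) • u := by
    rw [add_mulVec, mulVec_mulVec, mul_nonsing_inv S hSdet, one_mulVec, vecMulVec_mulVec,
      op_smul_eq_smul, add_smul, one_smul]
  have hpre : S⁻¹ *ᵥ u = (1 + v ⬝ᵥ S⁻¹ *ᵥ u) • (S + vecMulVec u v)⁻¹ *ᵥ u := by
    rw [← mulVec_smul, ← himage, mulVec_mulVec, nonsing_inv_mul _ hAdet, one_mulVec]
  by_cases hd : 1 + v ⬝ᵥ S⁻¹ *ᵥ u = 0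
  · have hu : u = 0 := by
      rw [hd, zero_smul] at hpre
      rw [← one_mulVec u, ← mul_nonsing_inv S hSdet, ← mulVec_mulVec, hpre, mulVec_zero]
    simp [hu]
  · rw [eq_inv_smul_iff₀ hd, ← hpre]

end Matrix

theorem add_div_one_add_eq_one_add_div_div {K : Type*} [Field K] {a b c : K} (hb : b ≠ 0) :
    (a + b) / (1 + (c + 2 * a + b)) =
      (1 + a / b) / ((1 + a / b) ^ 2 + (1 + (c - a ^ 2 / b)) * (1 / b)) := by
  have hden : (1 + a / b) ^ 2 + (1 + (c - a ^ 2 / b)) * (1 / b) = (1 + (c + 2 * a + b)) / b := by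
    field_simp
    ring
  rw [hden, one_add_div hb, add_comm b, div_div_div_cancel_right₀ hb]

theorem stmt_13 {k : ℕ} (hk : 0 < k) (S : Matrix (Fin k) (Fin k) ℝ)
    (hS : S.PosDef) (μ : Fin k → ℝ) :
    let ones : Fin k → ℝ := fun _ => 1
    let μt : Fin k → ℝ := μ + ones
    let A : Matrix (Fin k) (Fin k) ℝ := S + vecMulVec μt μt
    let Q : Matrix (Fin k) (Fin k) ℝ :=
      S⁻¹ - (ones ⬝ᵥ S⁻¹ *ᵥ ones)⁻¹ • (S⁻¹ * vecMulVec ones ones * S⁻¹)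
    let RGMV : ℝ := (ones ⬝ᵥ S⁻¹ *ᵥ μ) / (ones ⬝ᵥ S⁻¹ *ᵥ ones)
    let VGMV : ℝ := 1 / (ones ⬝ᵥ S⁻¹ *ᵥ ones)
    let s : ℝ := μ ⬝ᵥ Q *ᵥ μ
    ones ⬝ᵥ A⁻¹ *ᵥ μt = (1 + RGMV) / ((1 + RGMV) ^ 2 + (1 + s) * VGMV) := by
  intro ones μt A Q RGMV VGMV s
  have hones : ones ≠ 0 := Function.ne_iff.mpr ⟨⟨0, hk⟩, one_ne_zero⟩
  have hb : 0 < ones ⬝ᵥ S⁻¹ *ᵥ ones := by simpa using hS.inv.dotProduct_mulVec_pos hones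
  have hA : A.PosDef := hS.add_posSemidef (by simpa using posSemidef_vecMulVec_self_star μt)
  have hsymm : μ ⬝ᵥ S⁻¹ *ᵥ ones = ones ⬝ᵥ S⁻¹ *ᵥ μ :=
    dotProduct_mulVec_comm_of_isSymm (isHermitian_iff_isSymm.mp hS.inv.isHermitian) _ _
  have hlhs : ones ⬝ᵥ A⁻¹ *ᵥ μt = (ones ⬝ᵥ S⁻¹ *ᵥ μt) / (1 + μt ⬝ᵥ S⁻¹ *ᵥ μt) := by
    rw [inv_add_vecMulVec_mulVec hS.isUnit hA.isUnit, dotProduct_smul, smul_eq_mul, inv_mul_eq_div]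
  have hs : s = μ ⬝ᵥ S⁻¹ *ᵥ μ - (ones ⬝ᵥ S⁻¹ *ᵥ μ) ^ 2 / (ones ⬝ᵥ S⁻¹ *ᵥ ones) := by
    simp only [s, Q, sub_mulVec, dotProduct_sub, smul_mulVec, dotProduct_smul, smul_eq_mul,
      dotProduct_mul_vecMulVec_mul_mulVec, hsymm]
    ring
  have hnum : ones ⬝ᵥ S⁻¹ *ᵥ μt = ones ⬝ᵥ S⁻¹ *ᵥ μ + ones ⬝ᵥ S⁻¹ *ᵥ ones := by
    rw [mulVec_add, dotProduct_add]
  have hden : μt ⬝ᵥ S⁻¹ *ᵥ μt =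
      μ ⬝ᵥ S⁻¹ *ᵥ μ + 2 * ones ⬝ᵥ S⁻¹ *ᵥ μ + ones ⬝ᵥ S⁻¹ *ᵥ ones := by
    simp only [μt, mulVec_add, dotProduct_add, add_dotProduct, hsymm]
    ring
  rw [hlhs, hnum, hden, hs]
  exact add_div_one_add_eq_one_add_div_div hb.ne'
end
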